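/- Let w, w_* : ℝᵈ × ℝᵈ → ℝ be ℤᵈ-periodic in ξ, compactly supported in x inside a bounded set Q, with Δ_ξ w_*(x, ξ) = w(x, ξ), and with w_* in C¹ in x and C² in ξ with continuous mixed derivatives ∂²w_*/∂x_j ∂ξ_j. Then for every ε > 0: ∫_Q w(x, x/ε) dx = -ε ∫_Q Σ_{j=1}^{d} (∂² w_* / ∂x_j ∂ξ_j)(x, x/ε) dx. -/

import Mathlib

open MeasureTheory Function Set

/-!
Put `g_j(x) = ∂w_*/∂ξ_j (x, x/ε)`. By the chain rule,
`ε ∂g_j/∂x_j (x) = ε ∂²w_*/∂x_j∂ξ_j (x, x/ε) + ∂²w_*/∂ξ_j² (x, x/ε)`,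
and `g_j` is `C¹` with compact support, so `∫ ∂g_j/∂x_j = 0` (integration by parts against `1`).
Summing over `j` and using `Δ_ξ w_* = w` gives the identity.
-/

theorem hasCompactSupport_comp_prodMk {X Y M : Type*} [TopologicalSpace X] [T2Space X] [Zero M]
    {Ψ : X × Y → M} {K : Set X} (hK : IsCompact K) (hΨK : support Ψ ⊆ K ×ˢ univ) (φ : X → Y) :
    HasCompactSupport fun x => Ψ (x, φ x) :=
  HasCompactSupport.of_support_subset_isCompact hK fun _ hx => (hΨK hx).1

section PartialDerivatives

variable {E F G : Type*} [NormedAddCommGroup E] [NormedSpace ℝ E] [NormedAddCommGroup F]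
  [NormedSpace ℝ F] [NormedAddCommGroup G] [NormedSpace ℝ G]

theorem ContDiff.fderiv_apply_const {f : E → F} (hf : ContDiff ℝ 2 f) (v : E) :
    ContDiff ℝ 1 fun p => fderiv ℝ f p v :=
  (hf.fderiv_right le_rfl).clm_apply contDiff_const

theorem fderiv_comp_prodMk_left_apply {f : E × F → G} {x : E} {ξ : F}
    (hf : DifferentiableAt ℝ f (x, ξ)) (u : E) :
    fderiv ℝ (fun y => f (y, ξ)) x u = fderiv ℝ f (x, ξ) (u, 0) := by
  have h : HasFDerivAt (fun y => f (y, ξ)) ((fderiv ℝ f (x, ξ)).comp (.inl ℝ E F)) x :=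
    hf.hasFDerivAt.comp x (hasFDerivAt_prodMk_left x ξ)
  rw [h.fderiv]
  rfl

theorem fderiv_comp_prodMk_right_apply {f : E × F → G} {x : E} {ξ : F}
    (hf : DifferentiableAt ℝ f (x, ξ)) (v : F) :
    fderiv ℝ (fun η => f (x, η)) ξ v = fderiv ℝ f (x, ξ) (0, v) := by
  have h : HasFDerivAt (fun η => f (x, η)) ((fderiv ℝ f (x, ξ)).comp (.inr ℝ E F)) ξ :=
    hf.hasFDerivAt.comp ξ (hasFDerivAt_prodMk_right x ξ)
  rw [h.fderiv]
  rfl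

theorem fderiv_fderiv_partial_right_apply {f : E → F → G} (hf : ContDiff ℝ 2 (uncurry f))
    (x : E) (ξ u v : F) :
    fderiv ℝ (fun η => fderiv ℝ (fun η' => f x η') η v) ξ u =
      fderiv ℝ (fun p => fderiv ℝ (uncurry f) p (0, v)) (x, ξ) (0, u) := by
  have hf1 : Differentiable ℝ (uncurry f) := hf.differentiable two_ne_zero
  have hfv := (hf.fderiv_apply_const (0, v)).differentiable one_ne_zero
  have hξ : ∀ η, fderiv ℝ (fun η' => f x η') η v = fderiv ℝ (uncurry f) (x, η) (0, v) :=
    fun η => fderiv_comp_prodMk_right_apply (hf1 _) v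
  simp only [hξ]
  exact fderiv_comp_prodMk_right_apply (hfv _) u

theorem fderiv_fderiv_partial_left_apply {f : E → F → G} (hf : ContDiff ℝ 2 (uncurry f))
    (x u : E) (ξ v : F) :
    fderiv ℝ (fun y => fderiv ℝ (fun η => f y η) ξ v) x u =
      fderiv ℝ (fun p => fderiv ℝ (uncurry f) p (0, v)) (x, ξ) (u, 0) := by
  have hf1 : Differentiable ℝ (uncurry f) := hf.differentiable two_ne_zero
  have hfv := (hf.fderiv_apply_const (0, v)).differentiable one_ne_zero
  have hξ : ∀ y, fderiv ℝ (fun η => f y η) ξ v = fderiv ℝ (uncurry f) (y, ξ) (0, v) :=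
    fun y => fderiv_comp_prodMk_right_apply (hf1 _) v
  simp only [hξ]
  exact fderiv_comp_prodMk_left_apply (hfv _) u

end PartialDerivatives

section Integral

variable {E G : Type*} [NormedAddCommGroup E] [NormedSpace ℝ E] [MeasurableSpace E]
  [BorelSpace E] {μ : Measure E} [NormedAddCommGroup G] [NormedSpace ℝ G]

theorem integral_fderiv_apply_eq_zero [FiniteDimensional ℝ E] [μ.IsAddHaarMeasure] {g : E → G}
    (hg : ContDiff ℝ 1 g) (hgc : HasCompactSupport g) (v : E) : ∫ x, fderiv ℝ g x v ∂μ = 0 := by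
  have hg' : Integrable (fun x => fderiv ℝ g x v) μ :=
    (hg.continuous_fderiv_apply one_ne_zero).comp (continuous_id.prodMk continuous_const)
      |>.integrable_of_hasCompactSupport (hgc.fderiv_apply ℝ v)
  have := integral_smul_fderiv_eq_neg_fderiv_smul_of_integrable (μ := μ) (f := fun _ => (1 : ℝ))
    (g := g) (v := v) (by simp) (by simpa using hg')
    (by simpa using (hg.continuous.integrable_of_hasCompactSupport hgc))
    (fun _ _ => differentiableAt_const _) (fun x _ => (hg.differentiable one_ne_zero) x)
  simpa using this

theorem integrable_fderiv_apply_comp_prodMk [IsFiniteMeasureOnCompacts μ] {F : Type*}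
    [NormedAddCommGroup F] [NormedSpace ℝ F] {Φ : E × F → G} (hΦ : ContDiff ℝ 1 Φ)
    {K : Set E} (hK : IsCompact K) (hΦK : tsupport Φ ⊆ K ×ˢ univ) {φ : E → F}
    (hφ : Continuous φ) (u : E × F) : Integrable (fun x => fderiv ℝ Φ (x, φ x) u) μ :=
  ((hΦ.continuous_fderiv_apply one_ne_zero).comp
    ((continuous_id.prodMk hφ).prodMk continuous_const)).integrable_of_hasCompactSupport
    (hasCompactSupport_comp_prodMk hK
      ((subset_tsupport _).trans ((tsupport_fderiv_apply_subset ℝ u).trans hΦK)) φ)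

theorem setIntegral_fderiv_inr_eq_neg_smul_setIntegral_fderiv_inl [FiniteDimensional ℝ E]
    [μ.IsAddHaarMeasure] {Φ : E × E → G} (hΦ : ContDiff ℝ 1 Φ) {K s : Set E}
    (hK : IsCompact K) (hΦK : tsupport Φ ⊆ K ×ˢ univ) (hKs : K ⊆ s) {ε : ℝ} (hε : ε ≠ 0)
    (v : E) :
    ∫ x in s, fderiv ℝ Φ (x, ε⁻¹ • x) (0, v) ∂μ =
      -(ε • ∫ x in s, fderiv ℝ Φ (x, ε⁻¹ • x) (v, 0) ∂μ) := by
  set L : E →L[ℝ] E × E :=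
    (ContinuousLinearMap.id ℝ E).prod (ε⁻¹ • ContinuousLinearMap.id ℝ E)
  have hsupp : ∀ u, support (fun p => fderiv ℝ Φ p u) ⊆ K ×ˢ univ := fun u =>
    (subset_tsupport _).trans ((tsupport_fderiv_apply_subset ℝ u).trans hΦK)
  have hint : ∀ u, Integrable (fun x => fderiv ℝ Φ (x, ε⁻¹ • x) u) μ :=
    integrable_fderiv_apply_comp_prodMk hΦ hK hΦK (continuous_id.const_smul ε⁻¹)
  have hderiv : ∀ x, fderiv ℝ (Φ ∘ L) x v =
      fderiv ℝ Φ (x, ε⁻¹ • x) (v, 0) + ε⁻¹ • fderiv ℝ Φ (x, ε⁻¹ • x) (0, v) := by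
    intro x
    have hL : L v = (v, 0) + ε⁻¹ • (0, v) := by ext <;> simp [L]
    rw [fderiv_comp x ((hΦ.differentiable one_ne_zero) _) L.differentiableAt, L.fderiv,
      ContinuousLinearMap.comp_apply, hL, map_add, map_smul]
    rfl
  have hzero := integral_fderiv_apply_eq_zero (μ := μ) (hΦ.comp L.contDiff)
    (hasCompactSupport_comp_prodMk hK ((subset_tsupport _).trans hΦK) _) v
  simp_rw [hderiv] at hzero
  rw [integral_add (hint _) ((hint _).fun_smul ε⁻¹), integral_smul] at hzero
  have hset : ∀ u,
      ∫ x in s, fderiv ℝ Φ (x, ε⁻¹ • x) u ∂μ = ∫ x, fderiv ℝ Φ (x, ε⁻¹ • x) u ∂μ :=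
    fun u => setIntegral_eq_integral_of_forall_compl_eq_zero fun x hx =>
      notMem_support.1 fun h => hx (hKs (hsupp u h).1)
  rw [hset, hset, ← smul_neg, ← eq_neg_of_add_eq_zero_right hzero, smul_inv_smul₀ hε]

end Integral

theorem stmt7_general (d : ℕ) (Q : Set (Fin d → ℝ))
    (w wstar : (Fin d → ℝ) → (Fin d → ℝ) → ℝ)
    (hsmooth : ContDiff ℝ 2 (Function.uncurry wstar))
    (hK : ∃ K : Set (Fin d → ℝ), IsCompact K ∧ K ⊆ Q ∧
      ∀ ξ : Fin d → ℝ, Function.support (fun x => wstar x ξ) ⊆ K)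
    (hlap : ∀ x ξ : Fin d → ℝ,
      (∑ j : Fin d, fderiv ℝ (fun η => fderiv ℝ (fun η' => wstar x η') η
        (Pi.single j 1)) ξ (Pi.single j 1)) = w x ξ) :
    ∀ ε : ℝ, 0 < ε →
      ∫ x in Q, w x (ε⁻¹ • x) =
        -(ε * ∫ x in Q, ∑ j : Fin d,
          fderiv ℝ (fun y => fderiv ℝ (fun η => wstar y η) (ε⁻¹ • x)
            (Pi.single j 1)) x (Pi.single j 1)) := by
  obtain ⟨K, hKc, hKQ, hKsupp⟩ := hK
  intro ε hε
  set G : Fin d → (Fin d → ℝ) × (Fin d → ℝ) → ℝ :=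
    fun j p => fderiv ℝ (uncurry wstar) p (0, Pi.single j 1)
  have hG : ∀ j, ContDiff ℝ 1 (G j) := fun j => hsmooth.fderiv_apply_const _
  have hGK : ∀ j, tsupport (G j) ⊆ K ×ˢ univ := fun j =>
    (tsupport_fderiv_apply_subset ℝ _).trans <|
      closure_minimal (fun p hp => ⟨hKsupp p.2 hp, trivial⟩) (hKc.isClosed.prod isClosed_univ)
  have hint : ∀ j u, IntegrableOn (fun x => fderiv ℝ (G j) (x, ε⁻¹ • x) u) Q := fun j u =>
    (integrable_fderiv_apply_comp_prodMk (hG j) hKc (hGK j)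
      (continuous_id.const_smul ε⁻¹) u).integrableOn
  simp_rw [← hlap, fderiv_fderiv_partial_right_apply hsmooth,
    fderiv_fderiv_partial_left_apply hsmooth]
  rw [integral_finsetSum _ fun j _ => hint j _, integral_finsetSum _ fun j _ => hint j _,
    Finset.mul_sum, ← Finset.sum_neg_distrib]
  exact Finset.sum_congr rfl fun j _ =>
    setIntegral_fderiv_inr_eq_neg_smul_setIntegral_fderiv_inl (hG j) hKc (hGK j) hKQ hε.ne' _

/-- The identity behind the averaging lemma: if `Δ_ξ w_*(x,ξ) = w(x,ξ)` with
`w_*` compactly supported in `x` inside `Q`, then for every `ε > 0`,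
`∫_Q w(x, x/ε) dx = -ε ∫_Q Σ_j ∂²w_*/∂x_j∂ξ_j (x, x/ε) dx`. -/
theorem stmt7 (d : ℕ) (hd : 1 ≤ d) (Q : Set (Fin d → ℝ))
    (hQb : Bornology.IsBounded Q) (hQm : MeasurableSet Q)
    (w wstar : (Fin d → ℝ) → (Fin d → ℝ) → ℝ)
    (hsmooth : ContDiff ℝ 2 (Function.uncurry wstar))
    (hcontw : Continuous (Function.uncurry w))
    (hperw : ∀ (x ξ : Fin d → ℝ) (k : Fin d → ℤ),
      w x (ξ + fun i => (k i : ℝ)) = w x ξ)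
    (hperstar : ∀ (x ξ : Fin d → ℝ) (k : Fin d → ℤ),
      wstar x (ξ + fun i => (k i : ℝ)) = wstar x ξ)
    (hK : ∃ K : Set (Fin d → ℝ), IsCompact K ∧ K ⊆ Q ∧
      ∀ ξ : Fin d → ℝ, Function.support (fun x => wstar x ξ) ⊆ K)
    (hlap : ∀ x ξ : Fin d → ℝ,
      (∑ j : Fin d, fderiv ℝ (fun η => fderiv ℝ (fun η' => wstar x η') η
        (Pi.single j 1)) ξ (Pi.single j 1)) = w x ξ)
    (hmixedcont : ∀ j : Fin d, Continuous (Function.uncurry fun x ξ =>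
      fderiv ℝ (fun y => fderiv ℝ (fun η => wstar y η) ξ (Pi.single j 1)) x
        (Pi.single j 1))) :
    ∀ ε : ℝ, 0 < ε →
      ∫ x in Q, w x (ε⁻¹ • x) =
        -(ε * ∫ x in Q, ∑ j : Fin d,
          fderiv ℝ (fun y => fderiv ℝ (fun η => wstar y η) (ε⁻¹ • x)
            (Pi.single j 1)) x (Pi.single j 1)) :=
  stmt7_general d Q w wstar hsmooth hK hlap
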